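/- For every smooth f : G → ℝ and every x ∈ G, the Pythagorean decomposition Σ_{i,j=1}^n ( X_i(X_j f)(x) )² = Σ_{i,j=1}^n ( ½( X_i(X_j f)(x) + X_j(X_i f)(x) ) )² + ¼ Σ_{i,j=1}^n ( f'(x)(0, ω(e_i,e_j)) )² holds; consequently, Σ_{i,j=1}^n (½(X_iX_jf + X_jX_if)(x))² + (ρ₂/4)·Γ^Z(f)(x) ≤ Σ_{i,j=1}^n (X_iX_jf(x))² ≤ Σ_{i,j=1}^n (½(X_iX_jf + X_jX_if)(x))² + (‖ω‖₂²/4)·Γ^Z(f)(x). -/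

import Mathlib

noncomputable section

variable {V C : Type*} [NormedAddCommGroup V] [InnerProductSpace ℝ V] [FiniteDimensional ℝ V]
  [NormedAddCommGroup C] [InnerProductSpace ℝ C] [FiniteDimensional ℝ C]

/-- The horizontal (left-invariant) derivative on the finite-dimensional
Heisenberg-like group `G = V × 𝐂`: `(X_{v₀} f)(x) = f'(x)(v₀, ½ ω(x₁, v₀))`. -/
def Xd (ω : V →L[ℝ] V →L[ℝ] C) (v₀ : V) (f : V × C → ℝ) : V × C → ℝ :=
  fun x => fderiv ℝ f x (v₀, (1 / 2 : ℝ) • ω x.1 v₀)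

/-- The vertical derivative on `G = V × 𝐂`: `(Z_{c₀} f)(x) = f'(x)(0, c₀)`. -/
def Zd (c₀ : C) (f : V × C → ℝ) : V × C → ℝ :=
  fun x => fderiv ℝ f x (0, c₀)

/-- The sub-Laplacian `L f = Σ_i X_i(X_i f)`. -/
def Ld {n : ℕ} (ω : V →L[ℝ] V →L[ℝ] C) (e : OrthonormalBasis (Fin n) ℝ V)
    (f : V × C → ℝ) : V × C → ℝ :=
  fun x => ∑ i, Xd ω (e i) (Xd ω (e i) f) x

/-- The horizontal carré du champ `Γ(f,g) = Σ_i (X_i f)(X_i g)`. -/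
def GammaH {n : ℕ} (ω : V →L[ℝ] V →L[ℝ] C) (e : OrthonormalBasis (Fin n) ℝ V)
    (f g : V × C → ℝ) : V × C → ℝ :=
  fun x => ∑ i, Xd ω (e i) f x * Xd ω (e i) g x

/-- The vertical carré du champ `Γ^Z(f,g) = Σ_ℓ (Z_ℓ f)(Z_ℓ g)`. -/
def GammaZ {d : ℕ} (fb : OrthonormalBasis (Fin d) ℝ C)
    (f g : V × C → ℝ) : V × C → ℝ :=
  fun x => ∑ ℓ, Zd (fb ℓ) f x * Zd (fb ℓ) g x

/-- `Γ₂(f) = ½(L Γ(f) − 2 Γ(f, Lf))`. -/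
def Gamma2H {n : ℕ} (ω : V →L[ℝ] V →L[ℝ] C) (e : OrthonormalBasis (Fin n) ℝ V)
    (f : V × C → ℝ) : V × C → ℝ :=
  fun x => (1 / 2 : ℝ) * (Ld ω e (GammaH ω e f f) x - 2 * GammaH ω e f (Ld ω e f) x)

/-- `Γ₂^Z(f) = ½(L Γ^Z(f) − 2 Γ^Z(f, Lf))`. -/
def Gamma2Z {n d : ℕ} (ω : V →L[ℝ] V →L[ℝ] C) (e : OrthonormalBasis (Fin n) ℝ V)
    (fb : OrthonormalBasis (Fin d) ℝ C) (f : V × C → ℝ) : V × C → ℝ :=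
  fun x => (1 / 2 : ℝ) * (Ld ω e (GammaZ fb f f) x - 2 * GammaZ fb f (Ld ω e f) x)

/-- The vertical derivative `W_{ij} f (x) = f'(x)(0, ω(v₁, v₂))`. -/
def Wd (ω : V →L[ℝ] V →L[ℝ] C) (v₁ v₂ : V) (f : V × C → ℝ) : V × C → ℝ :=
  fun x => fderiv ℝ f x (0, ω v₁ v₂)

open scoped RealInnerProductSpace

set_option linter.unusedSectionVars false

lemma XdXd_eq (ω : V →L[ℝ] V →L[ℝ] C) (f : V × C → ℝ) (hf : ContDiff ℝ (⊤ : ℕ∞) f)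
    (v w : V) (x : V × C) :
    Xd ω v (Xd ω w f) x
      = fderiv ℝ (fderiv ℝ f) x (v, (1/2:ℝ) • ω x.1 v) (w, (1/2:ℝ) • ω x.1 w)
        + fderiv ℝ f x (0, (1/2:ℝ) • ω v w) := by
  have hc : DifferentiableAt ℝ (fderiv ℝ f) x :=
    ((hf.fderiv_right (m := (⊤ : ℕ∞)) (by simp)).differentiable (by simp)) x
  set L : V × C →L[ℝ] V × C :=
    ContinuousLinearMap.prod 0
      (((1/2:ℝ) • ω.flip w).comp (ContinuousLinearMap.fst ℝ V C)) with hL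
  have hu : HasFDerivAt (fun y : V × C => (w, (1/2:ℝ) • ω y.1 w)) L x := by
    have h0 : HasFDerivAt (fun y : V × C => ((w, (0:C)) + L y)) L x :=
      L.hasFDerivAt.const_add _
    convert h0 using 2 with y
    simp [hL, Prod.ext_iff]
  have key := fderiv_clm_apply (c := fderiv ℝ f)
    (u := fun y : V × C => (w, (1/2:ℝ) • ω y.1 w)) hc hu.differentiableAt
  have : Xd ω v (Xd ω w f) x
      = fderiv ℝ (fun y : V × C => fderiv ℝ f y (w, (1/2:ℝ) • ω y.1 w)) x
          (v, (1/2:ℝ) • ω x.1 v) := rfl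
  rw [this, key, hu.fderiv]
  simp [hL]
  ring

lemma Xd_comm (ω : V →L[ℝ] V →L[ℝ] C) (hskew : ∀ v w : V, ω v w = -ω w v)
    (f : V × C → ℝ) (hf : ContDiff ℝ (⊤ : ℕ∞) f) (v w : V) (x : V × C) :
    Xd ω v (Xd ω w f) x - Xd ω w (Xd ω v f) x = fderiv ℝ f x (0, ω v w) := by
  rw [XdXd_eq ω f hf v w x, XdXd_eq ω f hf w v x]
  have hsym : IsSymmSndFDerivAt ℝ f x := hf.contDiffAt.isSymmSndFDerivAt (by rw [minSmoothness_of_isRCLikeNormedField]; exact WithTop.coe_le_coe.mpr le_top)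
  rw [hsym (w, (1/2:ℝ) • ω x.1 w) (v, (1/2:ℝ) • ω x.1 v)]
  have : fderiv ℝ f x (0, (1/2:ℝ) • ω v w) - fderiv ℝ f x (0, (1/2:ℝ) • ω w v)
      = fderiv ℝ f x (0, ω v w) := by
    rw [← map_sub]
    congr 1
    rw [hskew w v]
    rw [Prod.mk_sub_mk, Prod.mk.injEq]
    refine ⟨by simp, by module⟩
  linarith [this]

/-- The Pythagorean decomposition of the full horizontal Hessian on the
finite-dimensional Heisenberg-like group `G = V × 𝐂`:
`Σ_{i,j} (X_iX_jf)² = Σ_{i,j} (½(X_iX_jf + X_jX_if))² + ¼ Σ_{i,j} (f'(x)(0,ω(e_i,e_j)))²`,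
together with the consequent two-sided bounds involving `ρ₂/4` and `‖ω‖₂²/4` times
`Γ^Z(f)`. -/
theorem hessian_pythagoras {n d : ℕ}
    (ω : V →L[ℝ] V →L[ℝ] C) (hskew : ∀ v w : V, ω v w = -ω w v)
    (e : OrthonormalBasis (Fin n) ℝ V) (fb : OrthonormalBasis (Fin d) ℝ C)
    (f : V × C → ℝ) (hf : ContDiff ℝ (⊤ : ℕ∞) f) (x : V × C) :
    ((∑ i, ∑ j, (Xd ω (e i) (Xd ω (e j) f) x) ^ 2)
        = (∑ i, ∑ j, ((1 / 2 : ℝ)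
              * (Xd ω (e i) (Xd ω (e j) f) x + Xd ω (e j) (Xd ω (e i) f) x)) ^ 2)
          + (1 / 4 : ℝ) * ∑ i, ∑ j, (fderiv ℝ f x (0, ω (e i) (e j))) ^ 2) ∧
    ((∑ i, ∑ j, ((1 / 2 : ℝ)
            * (Xd ω (e i) (Xd ω (e j) f) x + Xd ω (e j) (Xd ω (e i) f) x)) ^ 2)
        + (sInf {r : ℝ | ∃ z : C, ‖z‖ = 1 ∧
              r = ∑ i, ∑ j, (⟪ω (e i) (e j), z⟫) ^ 2} / 4) * GammaZ fb f f x
      ≤ ∑ i, ∑ j, (Xd ω (e i) (Xd ω (e j) f) x) ^ 2) ∧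
    ((∑ i, ∑ j, (Xd ω (e i) (Xd ω (e j) f) x) ^ 2)
      ≤ (∑ i, ∑ j, ((1 / 2 : ℝ)
              * (Xd ω (e i) (Xd ω (e j) f) x + Xd ω (e j) (Xd ω (e i) f) x)) ^ 2)
        + ((∑ i, ∑ j, ‖ω (e i) (e j)‖ ^ 2) / 4) * GammaZ fb f f x) := by
  classical
  set A : Fin n → Fin n → ℝ := fun i j => Xd ω (e i) (Xd ω (e j) f) x with hA
  set W : Fin n → Fin n → ℝ := fun i j => fderiv ℝ f x (0, ω (e i) (e j)) with hW
  have hcomm : ∀ i j, A i j - A j i = W i j := fun i j =>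
    Xd_comm ω hskew f hf (e i) (e j) x
  have hWanti : ∀ i j, W j i = - W i j := by
    intro i j
    have h0 : ((0:V), ω (e j) (e i)) = -((0:V), ω (e i) (e j)) := by
      rw [hskew (e j) (e i)]; simp [Prod.ext_iff]
    simp only [hW, h0, map_neg]
  -- cross term vanishes
  have hcross : ∑ i, ∑ j, ((1/2:ℝ) * (A i j + A j i)) * W i j = 0 := by
    have h1 : ∑ i, ∑ j, ((1/2:ℝ) * (A i j + A j i)) * W i j
        = ∑ j, ∑ i, ((1/2:ℝ) * (A i j + A j i)) * W i j := Finset.sum_comm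
    have h2 : ∑ j : Fin n, ∑ i : Fin n, ((1/2:ℝ) * (A i j + A j i)) * W i j
        = ∑ i : Fin n, ∑ j : Fin n, (-(((1/2:ℝ) * (A i j + A j i)) * W i j)) := by
      refine Finset.sum_congr rfl fun i _ => Finset.sum_congr rfl fun j _ => ?_
      rw [hWanti i j]; ring
    rw [h2] at h1
    simp only [Finset.sum_neg_distrib] at h1
    linarith [h1]
  have hpt : ∀ i j, A i j ^ 2
      = ((1/2:ℝ) * (A i j + A j i)) ^ 2
        + ((1/2:ℝ) * (A i j + A j i)) * W i j + (1/4:ℝ) * W i j ^ 2 := by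
    intro i j
    rw [← hcomm i j]; ring
  have heq1 : ∑ i, ∑ j, A i j ^ 2
      = (∑ i, ∑ j, ((1/2:ℝ) * (A i j + A j i)) ^ 2)
        + (1/4:ℝ) * ∑ i, ∑ j, W i j ^ 2 := by
    have : ∑ i, ∑ j, A i j ^ 2
        = ∑ i, ∑ j, (((1/2:ℝ) * (A i j + A j i)) ^ 2
            + ((1/2:ℝ) * (A i j + A j i)) * W i j + (1/4:ℝ) * W i j ^ 2) := by
      exact Finset.sum_congr rfl fun i _ => Finset.sum_congr rfl fun j _ => hpt i j
    rw [this]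
    simp only [Finset.sum_add_distrib]
    rw [hcross, Finset.mul_sum]
    simp [Finset.mul_sum]
  -- the vertical gradient
  set φ : C →L[ℝ] ℝ := (fderiv ℝ f x).comp (ContinuousLinearMap.inr ℝ V C) with hφ
  set z : C := (InnerProductSpace.toDual ℝ C).symm φ with hz
  have hzc : ∀ c : C, ⟪z, c⟫ = fderiv ℝ f x (0, c) := by
    intro c
    rw [hz]
    rw [InnerProductSpace.toDual_symm_apply]
    simp [hφ]
  have hWz : ∀ i j, W i j = ⟪z, ω (e i) (e j)⟫ := fun i j => (hzc _).symm
  have hGZ : GammaZ fb f f x = ‖z‖ ^ 2 := by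
    have : GammaZ fb f f x = ∑ ℓ, ⟪z, fb ℓ⟫ * ⟪fb ℓ, z⟫ := by
      simp only [GammaZ, Zd]
      refine Finset.sum_congr rfl fun ℓ _ => ?_
      rw [← hzc (fb ℓ), real_inner_comm (fb ℓ) z]
    rw [this, fb.sum_inner_mul_inner z z, real_inner_self_eq_norm_sq]
  refine ⟨heq1, ?_, ?_⟩
  · -- lower bound
    set S₀ : Set ℝ := {r : ℝ | ∃ z : C, ‖z‖ = 1 ∧
        r = ∑ i, ∑ j, (⟪ω (e i) (e j), z⟫) ^ 2} with hS₀
    have hbdd : BddBelow S₀ := by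
      refine ⟨0, fun r hr => ?_⟩
      obtain ⟨z', _, rfl⟩ := hr
      positivity
    have key : sInf S₀ * ‖z‖ ^ 2 ≤ ∑ i, ∑ j, W i j ^ 2 := by
      by_cases hz0 : z = 0
      · have h0 : sInf S₀ * ‖z‖ ^ 2 = 0 := by rw [hz0]; simp
        rw [h0]
        positivity
      · have hu1 : ‖‖z‖⁻¹ • z‖ = 1 := norm_smul_inv_norm hz0
        have hmem : (∑ i, ∑ j, (⟪ω (e i) (e j), ‖z‖⁻¹ • z⟫) ^ 2) ∈ S₀ :=
          ⟨‖z‖⁻¹ • z, hu1, rfl⟩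
        have hle := csInf_le hbdd hmem
        have hzn : (0:ℝ) < ‖z‖ := norm_pos_iff.mpr hz0
        have heq : (∑ i, ∑ j, (⟪ω (e i) (e j), ‖z‖⁻¹ • z⟫) ^ 2) * ‖z‖ ^ 2
            = ∑ i, ∑ j, W i j ^ 2 := by
          rw [Finset.sum_mul]
          refine Finset.sum_congr rfl fun i _ => ?_
          rw [Finset.sum_mul]
          refine Finset.sum_congr rfl fun j _ => ?_
          rw [real_inner_smul_right, hWz i j, real_inner_comm]
          field_simp
        calc sInf S₀ * ‖z‖ ^ 2
            ≤ (∑ i, ∑ j, (⟪ω (e i) (e j), ‖z‖⁻¹ • z⟫) ^ 2) * ‖z‖ ^ 2 :=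
              mul_le_mul_of_nonneg_right hle (by positivity)
          _ = ∑ i, ∑ j, W i j ^ 2 := heq
    rw [heq1, hGZ]
    linarith [key]
  · -- upper bound
    have hW2 : ∑ i, ∑ j, W i j ^ 2 ≤ (∑ i, ∑ j, ‖ω (e i) (e j)‖ ^ 2) * ‖z‖ ^ 2 := by
      rw [Finset.sum_mul]
      refine Finset.sum_le_sum fun i _ => ?_
      rw [Finset.sum_mul]
      refine Finset.sum_le_sum fun j _ => ?_
      rw [hWz i j]
      have h := real_inner_mul_inner_self_le z (ω (e i) (e j))
      rw [real_inner_self_eq_norm_sq, real_inner_self_eq_norm_sq] at h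
      nlinarith [h]
    rw [heq1, hGZ]
    linarith [hW2]
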